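/- arXiv:2604.25811 — 4 statements merged into one kernel-verified Lean document; each statement's English description precedes it below -/
import Mathlib

section
/- Let x be an infinite binary word, and let w and w' be distinct factors of x of the same length such that w and w' are tortoise-equivalent. Suppose w and w' each contain at least one 1, and write w = u v and w' = u' v, where u and u' each contain exactly one occurrence of 1. Then z v is a left special factor of x, where z is the longest common suffix of u and u'. -/
/-- The tortoise operation on binary words: if the word contains a 1 (`true`),
delete the first occurrence of 1 and append a 1 at the right end; otherwise do nothing. -/
def tortoise (w : List Bool) : List Bool :=
  if true ∈ w then (w.erase true) ++ [true] else w

/-- `w` is a factor (subword) of the infinite word `x`. -/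
def IsFactor (x : ℕ → Bool) (w : List Bool) : Prop :=
  ∃ i, w = (List.range w.length).map (fun t => x (i + t))

/-- The set of length-`n` factors of `x`. -/
def factorSet (x : ℕ → Bool) (n : ℕ) : Set (List Bool) :=
  {w | w.length = n ∧ IsFactor x w}

/-- The factor complexity of `x`. -/
noncomputable def rho (x : ℕ → Bool) (n : ℕ) : ℕ :=
  (factorSet x n).ncard

/-- The tortoise complexity of `x`: the number of `∼ₜ`-equivalence classes of
length-`n` factors of `x`, i.e. the number of distinct images under `tortoise`. -/
noncomputable def rhoTort (x : ℕ → Bool) (n : ℕ) : ℕ :=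
  (tortoise '' factorSet x n).ncard

/-- The `k`-tortoise complexity of `x`: the number of equivalence classes of
length-`n` factors of `x` under `tortoise^[k] w = tortoise^[k] v`. -/
noncomputable def rhoTortK (k : ℕ) (x : ℕ → Bool) (n : ℕ) : ℕ :=
  ((tortoise^[k]) '' factorSet x n).ncard

/-- `y` is a left special factor of `x`: both `0y` and `1y` are factors of `x`. -/
def LeftSpecial (x : ℕ → Bool) (y : List Bool) : Prop :=
  IsFactor x (false :: y) ∧ IsFactor x (true :: y)

/-- The Thue–Morse sequence: `tm n` is the parity of the number of 1's in the
binary expansion of `n` (`true` = 1). -/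
def tm (n : ℕ) : Bool :=
  decide ((Nat.digits 2 n).sum % 2 = 1)

/-- The regular paperfolding sequence, reindexed so that `pf m = f_{m+1}`:
writing `m + 1 = n' * 2^k` with `n'` odd, `pf m = true` iff `n' ≡ 3 (mod 4)`. -/
def pf (m : ℕ) : Bool :=
  decide ((m + 1) / 2 ^ (padicValNat 2 (m + 1)) % 4 = 3)

/-! Since `|u| = |u'|` and `u ≠ u'`, the longest common suffix `z` is proper in both, and by
maximality the letters just before it in `u` and in `u'` differ: one is `0`, the other `1`.
Extending by `v`, both `0zv` and `1zv` are suffixes of `w` or `w'`, hence factors of `x`. -/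

theorem IsFactor.of_isSuffix {x : ℕ → Bool} {w s : List Bool} (hw : IsFactor x w)
    (hs : s <:+ w) : IsFactor x s := by
  obtain ⟨i, hi⟩ := hw
  obtain ⟨p, rfl⟩ := hs
  refine ⟨i + p.length, ?_⟩
  simpa [List.range_add, List.drop_append, Function.comp_def, add_assoc] using
    congrArg (List.drop p.length) hi

theorem LeftSpecial.of_ne {x : ℕ → Bool} {y : List Bool} {b b' : Bool}
    (h : IsFactor x (b :: y)) (h' : IsFactor x (b' :: y)) (hb : b ≠ b') :
    LeftSpecial x y := by
  cases b <;> cases b'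
  · exact absurd rfl hb
  · exact ⟨h, h'⟩
  · exact ⟨h', h⟩
  · exact absurd rfl hb

theorem List.exists_cons_suffix_of_suffix_of_length_lt {α : Type*} {z l : List α}
    (hz : z <:+ l) (hlt : z.length < l.length) : ∃ b, b :: z <:+ l := by
  obtain ⟨p, rfl⟩ := hz
  obtain rfl | ⟨q, b, rfl⟩ := p.eq_nil_or_concat
  · simp at hlt
  · exact ⟨b, q, by simp⟩

theorem List.exists_ne_cons_suffix_of_maximal_common_suffix {α : Type*} {u u' z : List α}
    (hlen : u.length = u'.length) (hne : u ≠ u') (hz : z <:+ u) (hz' : z <:+ u')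
    (hzmax : ∀ s, s <:+ u → s <:+ u' → s.length ≤ z.length) :
    ∃ b b', b ≠ b' ∧ b :: z <:+ u ∧ b' :: z <:+ u' := by
  have hlt : z.length < u.length :=
    hz.length_le.lt_of_ne fun h => hne <| (hz.eq_of_length h).symm.trans
      (hz'.eq_of_length (h.trans hlen))
  obtain ⟨b, hb⟩ := exists_cons_suffix_of_suffix_of_length_lt hz hlt
  obtain ⟨b', hb'⟩ := exists_cons_suffix_of_suffix_of_length_lt hz' (hlen ▸ hlt)
  refine ⟨b, b', fun h => ?_, hb, hb'⟩
  subst h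
  simpa using hzmax _ hb hb'

theorem stmt_0_general (x : ℕ → Bool) (w w' u u' v z : List Bool)
    (hw : IsFactor x w) (hw' : IsFactor x w')
    (hne : w ≠ w') (hlen : w.length = w'.length)
    (hsplit : w = u ++ v) (hsplit' : w' = u' ++ v)
    (hz : z <:+ u) (hz' : z <:+ u')
    (hzmax : ∀ z' : List Bool, z' <:+ u → z' <:+ u' → z'.length ≤ z.length) :
    LeftSpecial x (z ++ v) := by
  subst hsplit hsplit'
  have hulen : u.length = u'.length := by simpa using hlen
  have hune : u ≠ u' := fun h => hne (by rw [h])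
  obtain ⟨b, b', hbb', hb, hb'⟩ :=
    List.exists_ne_cons_suffix_of_maximal_common_suffix hulen hune hz hz' hzmax
  exact .of_ne (hw.of_isSuffix (List.suffix_append_self_iff.mpr hb))
    (hw'.of_isSuffix (List.suffix_append_self_iff.mpr hb')) hbb'

/-- if `w ≠ w'` are equal-length tortoise-equivalent factors of an
infinite binary word `x`, each containing a 1, written `w = u v`, `w' = u' v` with
`u`, `u'` each containing exactly one 1, then `z v` is a left special factor of `x`,
where `z` is the longest common suffix of `u` and `u'`. -/
theorem stmt_0 (x : ℕ → Bool) (w w' u u' v z : List Bool)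
    (hw : IsFactor x w) (hw' : IsFactor x w')
    (hne : w ≠ w') (hlen : w.length = w'.length)
    (hteq : tortoise w = tortoise w')
    (h1 : true ∈ w) (h1' : true ∈ w')
    (hsplit : w = u ++ v) (hsplit' : w' = u' ++ v)
    (hu : u.count true = 1) (hu' : u'.count true = 1)
    (hz : z <:+ u) (hz' : z <:+ u')
    (hzmax : ∀ z' : List Bool, z' <:+ u → z' <:+ u' → z'.length ≤ z.length) :
    LeftSpecial x (z ++ v) :=
  stmt_0_general x w w' u u' v z hw hw' hne hlen hsplit hsplit' hz hz' hzmax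
end

section
/- Let w and v be factors of the regular paperfolding word f with |w| = |v| ≥ 8 (each such factor necessarily contains both a 0 and a 1). If the word obtained from w by deleting the first occurrence of 1 in w and appending a 1 at the end equals the word obtained from v by deleting the first occurrence of 1 in v and appending a 1 at the end — i.e., if tortoise(w) = tortoise(v) — then v = w. -/
/-!
If `w` and `v` both have a `1` among their first `n` letters, then `tortoise w = tortoise v`
forces `w` and `v` to agree from position `n` on, and their prefixes of length `n` to have the
same tortoise image. Every length-`8` factor of `pf` contains a `1`, so it suffices to treat
factors of length `8`. The identities `pf (2t) = [t odd]` and `pf (2m+1) = pf m` show that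
`pf m` depends only on `m mod 16` unless `m ≡ 7 (mod 8)`, and that `pf (8b+7) = pf b`; hence
every length-`8` factor occurs at a position below `48`, and these are checked directly.
-/

theorem tortoise_of_true_mem {w : List Bool} (h : true ∈ w) :
    tortoise w = w.erase true ++ [true] :=
  if_pos h

theorem tortoise_take_eq_and_drop_eq {w v : List Bool} {n : ℕ}
    (hlen : w.length = v.length) (hn : n ≤ w.length)
    (hw : true ∈ w.take n) (hv : true ∈ v.take n) (h : tortoise w = tortoise v) :
    tortoise (w.take n) = tortoise (v.take n) ∧ w.drop n = v.drop n := by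
  have split : ∀ u : List Bool, true ∈ u.take n →
      u.erase true = (u.take n).erase true ++ u.drop n := fun u hu => by
    conv_lhs => rw [← List.take_append_drop n u]
    exact List.erase_append_left _ hu
  have herase : w.erase true = v.erase true := by
    rw [tortoise_of_true_mem (List.mem_of_mem_take hw),
      tortoise_of_true_mem (List.mem_of_mem_take hv)] at h
    exact List.append_cancel_right h
  rw [split w hw, split v hv] at herase
  obtain ⟨htake, hdrop⟩ := List.append_inj herase (by
    simp only [List.length_erase_of_mem hw, List.length_erase_of_mem hv, List.length_take]
    omega)
  exact ⟨by rw [tortoise_of_true_mem hw, tortoise_of_true_mem hv, htake], hdrop⟩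

def factorAt (x : ℕ → Bool) (i n : ℕ) : List Bool :=
  (List.range n).map fun t => x (i + t)

theorem IsFactor.take {x : ℕ → Bool} {w : List Bool} (h : IsFactor x w) (n : ℕ) :
    IsFactor x (w.take n) := by
  obtain ⟨i, hi⟩ := h
  refine ⟨i, ?_⟩
  rw [List.length_take]
  conv_lhs => rw [hi]
  rw [← List.map_take, List.take_range]

theorem pf_two_mul (t : ℕ) : pf (2 * t) = decide (t % 2 = 1) := by
  unfold pf
  rw [padicValNat.eq_zero_of_not_dvd (by omega), pow_zero, Nat.div_one]
  exact decide_eq_decide.mpr (by omega)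

theorem pf_two_mul_add_one (m : ℕ) : pf (2 * m + 1) = pf m := by
  unfold pf
  rw [show 2 * m + 1 + 1 = 2 * (m + 1) by ring,
    padicValNat.mul (by omega) (by omega), padicValNat.self (by norm_num), pow_add, pow_one,
    Nat.mul_div_mul_left _ _ (by norm_num : 0 < 2)]

theorem pf_of_odd {m : ℕ} (h : m % 2 = 1) : pf m = pf (m / 2) := by
  conv_lhs => rw [show m = 2 * (m / 2) + 1 by omega]
  exact pf_two_mul_add_one _

theorem pf_eq_of_mod_four_eq_of_even {m m' : ℕ} (h : m % 4 = m' % 4) (he : m % 2 = 0) :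
    pf m = pf m' := by
  rw [show m = 2 * (m / 2) by omega, show m' = 2 * (m' / 2) by omega, pf_two_mul, pf_two_mul]
  exact decide_eq_decide.mpr (by omega)

theorem pf_eq_of_mod_sixteen_eq {m m' : ℕ} (h : m % 16 = m' % 16) (h7 : m % 8 ≠ 7) :
    pf m = pf m' := by
  by_cases h0 : m % 2 = 0
  · exact pf_eq_of_mod_four_eq_of_even (by omega) h0
  rw [pf_of_odd (by omega : m % 2 = 1), pf_of_odd (by omega : m' % 2 = 1)]
  by_cases h1 : m / 2 % 2 = 0
  · exact pf_eq_of_mod_four_eq_of_even (by omega) h1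
  rw [pf_of_odd (by omega : m / 2 % 2 = 1), pf_of_odd (by omega : m' / 2 % 2 = 1)]
  exact pf_eq_of_mod_four_eq_of_even (by omega) (by omega)

theorem pf_eight_mul_add_seven (b : ℕ) : pf (8 * b + 7) = pf b := by
  rw [show 8 * b + 7 = 2 * (2 * (2 * b + 1) + 1) + 1 by ring, pf_two_mul_add_one,
    pf_two_mul_add_one, pf_two_mul_add_one]

theorem exists_lt_48_factorAt_pf_eq (i : ℕ) : ∃ j < 48, factorAt pf i 8 = factorAt pf j 8 := by
  -- `i + s` is the only position of the window that is `≡ 7 (mod 8)`; the windows at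
  -- `i % 16 + 16 k` agree with the one at `i` elsewhere, and at `s` they read `pf (b + 2 k)`
  -- with `b ≤ 1`, which takes both values for `k < 3`
  set s := 7 - i % 8
  obtain ⟨k, hk, hpf⟩ : ∃ k < 3, pf ((i % 16 + s) / 8 + 2 * k) = pf ((i + s) / 8) := by
    have hsmall : ∀ b ≤ 1, ∀ c : Bool, ∃ k < 3, pf (b + 2 * k) = c := by decide +kernel
    exact hsmall _ (by omega) _
  refine ⟨i % 16 + 16 * k, by omega, List.map_congr_left fun t ht => ?_⟩
  have ht : t < 8 := List.mem_range.mp ht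
  by_cases h7 : (i + t) % 8 = 7
  · obtain rfl : t = s := by omega
    rw [show i + s = 8 * ((i + s) / 8) + 7 by omega,
      show i % 16 + 16 * k + s = 8 * ((i % 16 + s) / 8 + 2 * k) + 7 by omega,
      pf_eight_mul_add_seven, pf_eight_mul_add_seven, hpf]
  · exact pf_eq_of_mod_sixteen_eq (by omega) h7

theorem true_mem_factorAt_pf : ∀ i < 48, true ∈ factorAt pf i 8 := by
  decide +kernel

theorem factorAt_pf_eq_of_tortoise_eq :
    ∀ i < 48, ∀ j < 48, tortoise (factorAt pf i 8) = tortoise (factorAt pf j 8) →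
      factorAt pf i 8 = factorAt pf j 8 := by
  decide +kernel

theorem exists_lt_48_of_isFactor_pf {w : List Bool} (hw : IsFactor pf w) (h8 : w.length = 8) :
    ∃ i < 48, w = factorAt pf i 8 := by
  obtain ⟨i, hi⟩ := hw
  obtain ⟨j, hj, hij⟩ := exists_lt_48_factorAt_pf_eq i
  exact ⟨j, hj, by rw [hi, h8]; exact hij⟩

theorem true_mem_of_isFactor_pf {w : List Bool} (hw : IsFactor pf w) (h8 : w.length = 8) :
    true ∈ w := by
  obtain ⟨i, hi, rfl⟩ := exists_lt_48_of_isFactor_pf hw h8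
  exact true_mem_factorAt_pf i hi

theorem eq_of_tortoise_eq_of_isFactor_pf {w v : List Bool} (hw : IsFactor pf w)
    (hv : IsFactor pf v) (hw8 : w.length = 8) (hv8 : v.length = 8)
    (h : tortoise w = tortoise v) : w = v := by
  obtain ⟨i, hi, rfl⟩ := exists_lt_48_of_isFactor_pf hw hw8
  obtain ⟨j, hj, rfl⟩ := exists_lt_48_of_isFactor_pf hv hv8
  exact factorAt_pf_eq_of_tortoise_eq i hi j hj h

/-- if `w` and `v` are factors of the paperfolding word of the same
length `≥ 8` and `tortoise w = tortoise v`, then `v = w`. -/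
theorem stmt_3 (w v : List Bool)
    (hw : IsFactor pf w) (hv : IsFactor pf v)
    (hlen : w.length = v.length) (h8 : 8 ≤ w.length)
    (hteq : tortoise w = tortoise v) :
    v = w := by
  have hw8 : (w.take 8).length = 8 := by simp [h8]
  have hv8 : (v.take 8).length = 8 := by simp [← hlen, h8]
  obtain ⟨htake, hdrop⟩ := tortoise_take_eq_and_drop_eq hlen h8
    (true_mem_of_isFactor_pf (hw.take 8) hw8) (true_mem_of_isFactor_pf (hv.take 8) hv8) hteq
  have hprefix := eq_of_tortoise_eq_of_isFactor_pf (hw.take 8) (hv.take 8) hw8 hv8 htake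
  rw [← List.take_append_drop 8 v, ← List.take_append_drop 8 w, hprefix, hdrop]
end

section
/- For all integers n ≥ 10, the tortoise complexity of the Thue–Morse word satisfies ρ^t_t(n) = ρ_t(n) − 4 if the first two binary digits of n − 3 are 1 and 0 (i.e., the second-most-significant bit of n − 3 is 0), and ρ^t_t(n) = ρ_t(n) − 2 otherwise. -/
/-!
For `n ≥ 3` every factor of the Thue–Morse word `t` contains a `1`, so the tortoise class of a
factor is determined by the word obtained by deleting its first `1`. A factor starts with `1`, `01`
or `001`, and since a factor of length at least `4` occurs in `t` only at positions of one parity,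
for `n ≥ 10` the only factors identified in this way are the pairs `01x`, `10x`; both are
factors exactly when `x` is left special. Hence `ρ_t(n) - ρ^t_t(n)` is the number `s(n - 2)` of
left special factors of length `n - 2`. A left special factor of length `m ≥ 4` is the
length-`m` prefix of the image of a unique left special factor of length `⌈m/2⌉` under the
Thue–Morse morphism, so `s(m) = s(⌈m/2⌉)`; with `s(2) = 2` and `s(3) = 4` this gives
`s(m) = 4` exactly when the binary expansion of `m - 1` begins with `10`, and `s(m) = 2` otherwise.
-/

lemma Set.ncard_image_eq_ncard_sub_of_injOn_diff {α β : Type*} {f : α → β} {s t : Set α}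
    (hs : s.Finite) (hts : t ⊆ s) (hinj : Set.InjOn f (s \ t)) (himg : f '' t ⊆ f '' (s \ t)) :
    (f '' s).ncard = s.ncard - t.ncard := by
  rw [← Set.sdiff_union_of_subset hts, Set.image_union, Set.union_eq_left.mpr himg,
    hinj.ncard_image, Set.ncard_sdiff hts (hs.subset hts), Set.sdiff_union_of_subset hts]

section Window

variable {α : Type*} (x : ℕ → α)

def window (i n : ℕ) : List α := (List.range n).map fun t => x (i + t)

@[simp] lemma length_window (i n : ℕ) : (window x i n).length = n := by simp [window]

lemma window_succ (i n : ℕ) : window x i (n + 1) = x i :: window x (i + 1) n := by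
  simp [window, List.range_succ_eq_map, Function.comp_def, Nat.add_assoc, Nat.add_comm 1]

lemma window_eq_window_iff {i j n : ℕ} :
    window x i n = window x j n ↔ ∀ k < n, x (i + k) = x (j + k) := by
  simp [window, List.map_inj_left]

lemma take_window {i m n : ℕ} (h : m ≤ n) : (window x i n).take m = window x i m := by
  rw [window, ← List.map_take, List.take_range, min_eq_left h, window]

end Window

lemma isFactor_iff {x : ℕ → Bool} {w : List Bool} :
    IsFactor x w ↔ ∃ i, w = window x i w.length := Iff.rfl

lemma mem_factorSet_iff {x : ℕ → Bool} {w : List Bool} {n : ℕ} :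
    w ∈ factorSet x n ↔ w.length = n ∧ ∃ i, w = window x i n := by
  refine ⟨fun ⟨hw, h⟩ => ⟨hw, hw ▸ h⟩, fun ⟨hw, h⟩ => ⟨hw, ?_⟩⟩
  rwa [isFactor_iff, hw]

lemma leftSpecial_iff {x : ℕ → Bool} {y : List Bool} :
    LeftSpecial x y ↔ (∃ p, false :: y = window x p (y.length + 1)) ∧
      ∃ q, true :: y = window x q (y.length + 1) := Iff.rfl

lemma IsFactor.of_cons {x : ℕ → Bool} {a : Bool} {w : List Bool} (h : IsFactor x (a :: w)) :
    IsFactor x w := by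
  obtain ⟨i, hi⟩ := isFactor_iff.mp h
  rw [List.length_cons, window_succ, List.cons.injEq] at hi
  exact ⟨i + 1, hi.2⟩

lemma tm_two_mul (n : ℕ) : tm (2 * n) = tm n := by
  rcases Nat.eq_zero_or_pos n with rfl | hn
  · rfl
  · simp [tm, Nat.digits_def' (b := 2) (by norm_num) (by omega : 0 < 2 * n)]

lemma tm_two_mul_add_one (n : ℕ) : tm (2 * n + 1) = !tm n := by
  rw [tm, tm, Nat.digits_def' (by norm_num) (by omega), show (2 * n + 1) / 2 = n by omega,
    List.sum_cons]
  rcases Nat.mod_two_eq_zero_or_one (Nat.digits 2 n).sum with h | h <;> simp [h, Nat.add_mod]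

lemma tm_succ_of_even {i : ℕ} (hi : i % 2 = 0) : tm (i + 1) = !tm i := by
  obtain ⟨a, rfl⟩ : ∃ a, i = 2 * a := ⟨i / 2, by omega⟩
  rw [tm_two_mul_add_one, tm_two_mul]

lemma odd_of_tm_eq_tm_succ {i : ℕ} (h : tm i = tm (i + 1)) : i % 2 = 1 := by
  by_contra hi
  rw [tm_succ_of_even (by omega)] at h
  simp at h

lemma tm_add_two_of_tm_eq_tm_succ {i : ℕ} (h : tm i = tm (i + 1)) : tm (i + 2) = !tm (i + 1) :=
  tm_succ_of_even (by have := odd_of_tm_eq_tm_succ h; omega)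

lemma tm_add_two_eq_iff (i : ℕ) : tm (i + 2) = tm i ↔ tm (i / 2 + 1) = tm (i / 2) := by
  obtain ⟨a, rfl | rfl⟩ := Nat.even_or_odd' i
  · rw [show 2 * a + 2 = 2 * (a + 1) by ring, tm_two_mul, tm_two_mul,
      Nat.mul_div_cancel_left _ two_pos]
  · rw [show 2 * a + 1 + 2 = 2 * (a + 1) + 1 by ring, tm_two_mul_add_one, tm_two_mul_add_one,
      show (2 * a + 1) / 2 = a by omega, Bool.not_inj_iff]

lemma exists_tm_eq_tm_succ (i : ℕ) : ∃ k < 4, tm (i + k) = tm (i + k + 1) := by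
  by_contra! h
  have bool_cycle : ∀ a b c : Bool, a ≠ b → b ≠ c → c = a := by decide
  have h02 : tm (i + 2) = tm i := bool_cycle _ _ _ (h 0 (by norm_num)) (h 1 (by norm_num))
  have h24 : tm (i + 2 + 2) = tm (i + 2) :=
    bool_cycle _ _ _ (h 2 (by norm_num)) (h 3 (by norm_num))
  rw [tm_add_two_eq_iff] at h02 h24
  rw [show (i + 2) / 2 = i / 2 + 1 by omega, tm_add_two_of_tm_eq_tm_succ h02.symm] at h24
  simp at h24

lemma mod_two_eq_of_window_tm_eq {i j n : ℕ} (hn : 4 ≤ n) (h : window tm i n = window tm j n) :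
    i % 2 = j % 2 := by
  rw [window_eq_window_iff] at h
  by_contra hij
  wlog hi : i % 2 = 0 generalizing i j
  · exact this (fun k hk => (h k hk).symm) (Ne.symm hij) (by omega)
  obtain ⟨c, rfl⟩ : ∃ c, j = 2 * c + 1 := ⟨j / 2, by omega⟩
  -- two neighbours among `tm (2c), …, tm (2c + 4)` agree; they sit at an odd position, that is at
  -- an even offset `k - 1` from `j`, hence also at the even position `i + (k - 1)`
  obtain ⟨k, hk, hck⟩ := exists_tm_eq_tm_succ (2 * c)
  have hk1 : k % 2 = 1 := by have := odd_of_tm_eq_tm_succ hck; omega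
  have hodd := odd_of_tm_eq_tm_succ (i := i + (k - 1)) (by
    rw [h (k - 1) (by omega), show i + (k - 1) + 1 = i + k by omega, h k (by omega),
      show 2 * c + 1 + (k - 1) = 2 * c + k by omega, show 2 * c + 1 + k = 2 * c + k + 1 by omega]
    exact hck)
  omega

lemma window_tm_half_eq {c d m : ℕ} (h : window tm (2 * c) m = window tm (2 * d) m) :
    window tm c ((m + 1) / 2) = window tm d ((m + 1) / 2) := by
  rw [window_eq_window_iff] at h ⊢
  intro k hk
  have := h (2 * k) (by omega)
  rwa [← mul_add, ← mul_add, tm_two_mul, tm_two_mul] at this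

def tmSubst (w : List Bool) : List Bool := w.flatMap fun b => [b, !b]

lemma window_two_mul (i n : ℕ) : window tm (2 * i) (2 * n) = tmSubst (window tm i n) := by
  induction n generalizing i with
  | zero => rfl
  | succ n ih =>
    rw [show 2 * (n + 1) = 2 * n + 1 + 1 by ring, window_succ, window_succ, window_succ,
      show 2 * i + 1 + 1 = 2 * (i + 1) by ring, ih, tm_two_mul, tm_two_mul_add_one]
    simp [tmSubst]

lemma take_tmSubst_window (i m : ℕ) :
    (tmSubst (window tm i ((m + 1) / 2))).take m = window tm (2 * i) m := by
  rw [← window_two_mul, take_window _ (by omega)]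

lemma injOn_take_tmSubst (m : ℕ) :
    Set.InjOn (fun z => (tmSubst z).take m) (factorSet tm ((m + 1) / 2)) := by
  rintro z hz z' hz' h
  obtain ⟨-, c, rfl⟩ := mem_factorSet_iff.mp hz
  obtain ⟨-, d, rfl⟩ := mem_factorSet_iff.mp hz'
  exact window_tm_half_eq (by simpa only [take_tmSubst_window] using h)

def leftSpecialFactors (x : ℕ → Bool) (m : ℕ) : Set (List Bool) :=
  {y | y.length = m ∧ LeftSpecial x y}

lemma leftSpecialFactors_subset_factorSet (x : ℕ → Bool) (m : ℕ) :
    leftSpecialFactors x m ⊆ factorSet x m :=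
  fun _ ⟨hy, h⟩ => ⟨hy, h.1.of_cons⟩

lemma LeftSpecial.exists_eq_window_tm {y : List Bool} (hy : 4 ≤ y.length)
    (h : LeftSpecial tm y) :
    ∃ a b, tm a = true ∧ tm b = false ∧
      y = window tm (2 * a + 2) y.length ∧ y = window tm (2 * b + 2) y.length := by
  obtain ⟨⟨p, hp⟩, q, hq⟩ := leftSpecial_iff.mp h
  rw [window_succ, List.cons.injEq] at hp hq
  obtain ⟨hp0, hpy⟩ := hp
  obtain ⟨hq0, hqy⟩ := hq
  have hyy := hpy.symm.trans hqy
  have hpq := mod_two_eq_of_window_tm_eq hy hyy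
  rcases Nat.mod_two_eq_zero_or_one p with hp2 | hp2
  · have := (window_eq_window_iff tm).mp hyy 0 (by omega)
    rw [add_zero, add_zero, tm_succ_of_even hp2, tm_succ_of_even (by omega), ← hp0, ← hq0]
      at this
    simp at this
  · obtain ⟨a, rfl⟩ : ∃ a, p = 2 * a + 1 := ⟨p / 2, by omega⟩
    obtain ⟨b, rfl⟩ : ∃ b, q = 2 * b + 1 := ⟨q / 2, by omega⟩
    rw [tm_two_mul_add_one] at hp0 hq0
    exact ⟨a, b, by simpa using hp0.symm, by simpa using hq0.symm, hpy, hqy⟩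

lemma isFactor_tm_pair_iff {x : List Bool} (hx : 4 ≤ x.length) :
    IsFactor tm (false :: true :: x) ∧ IsFactor tm (true :: false :: x) ↔ LeftSpecial tm x := by
  refine ⟨fun ⟨h01, h10⟩ => ⟨h10.of_cons, h01.of_cons⟩, fun h => ?_⟩
  obtain ⟨a, b, ha, hb, hxa, hxb⟩ := h.exists_eq_window_tm hx
  refine ⟨isFactor_iff.mpr ⟨2 * b, ?_⟩, isFactor_iff.mpr ⟨2 * a, ?_⟩⟩
  · rw [List.length_cons, List.length_cons, window_succ, window_succ, tm_two_mul,
      tm_two_mul_add_one, hb, ← hxb]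
    rfl
  · rw [List.length_cons, List.length_cons, window_succ, window_succ, tm_two_mul,
      tm_two_mul_add_one, ha, ← hxa]
    rfl

lemma leftSpecialFactors_tm_eq_image {m : ℕ} (hm : 4 ≤ m) :
    leftSpecialFactors tm m =
      (fun z => (tmSubst z).take m) '' leftSpecialFactors tm ((m + 1) / 2) := by
  ext y
  constructor
  · rintro ⟨rfl, hy⟩
    obtain ⟨a, b, ha, hb, hya, hyb⟩ := hy.exists_eq_window_tm hm
    have hab : window tm (a + 1) ((y.length + 1) / 2) = window tm (b + 1) ((y.length + 1) / 2) :=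
      window_tm_half_eq (by rw [mul_add, mul_add, ← hya, ← hyb])
    refine ⟨window tm (a + 1) ((y.length + 1) / 2),
      ⟨length_window .., leftSpecial_iff.mpr ⟨⟨b, ?_⟩, a, ?_⟩⟩, ?_⟩
    · rw [length_window, window_succ, hb, hab]
    · rw [length_window, window_succ, ha]
    · dsimp only
      rw [take_tmSubst_window, mul_add, ← hya]
  · rintro ⟨z, ⟨hz, h⟩, rfl⟩
    obtain ⟨⟨p, hp⟩, q, hq⟩ := leftSpecial_iff.mp h
    rw [hz, window_succ, List.cons.injEq] at hp hq
    obtain ⟨hp0, rfl⟩ := hp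
    obtain ⟨hq0, hpq⟩ := hq
    have hpq' : window tm (2 * (p + 1)) m = window tm (2 * (q + 1)) m := by
      rw [← take_tmSubst_window, ← take_tmSubst_window, hpq]
    simp only [take_tmSubst_window]
    refine ⟨length_window .., leftSpecial_iff.mpr ⟨⟨2 * q + 1, ?_⟩, 2 * p + 1, ?_⟩⟩
    · rw [length_window, window_succ, tm_two_mul_add_one, ← hq0, hpq']
      rfl
    · rw [length_window, window_succ, tm_two_mul_add_one, ← hp0]
      rfl

lemma ncard_leftSpecialFactors_tm_half {m : ℕ} (hm : 4 ≤ m) :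
    (leftSpecialFactors tm m).ncard = (leftSpecialFactors tm ((m + 1) / 2)).ncard := by
  rw [leftSpecialFactors_tm_eq_image hm,
    ((injOn_take_tmSubst m).mono (leftSpecialFactors_subset_factorSet _ _)).ncard_image]

lemma LeftSpecial.tm_cons_cons {a b : Bool} {y : List Bool} (h : LeftSpecial tm (a :: b :: y)) :
    b = !a := by
  obtain ⟨⟨p, hp⟩, q, hq⟩ := leftSpecial_iff.mp h
  simp only [List.length_cons, window_succ, List.cons.injEq] at hp hq
  by_contra hba
  replace hba : b = a := by cases a <;> cases b <;> simp at hba ⊢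
  subst hba
  cases b
  · have := tm_add_two_of_tm_eq_tm_succ (hp.1.symm.trans hp.2.1)
    rw [← hp.2.1, ← hp.2.2.1] at this
    simp at this
  · have := tm_add_two_of_tm_eq_tm_succ (hq.1.symm.trans hq.2.1)
    rw [← hq.2.1, ← hq.2.2.1] at this
    simp at this

lemma leftSpecialFactors_tm_two : leftSpecialFactors tm 2 = {[false, true], [true, false]} := by
  ext y
  constructor
  · rintro ⟨hy, h⟩
    obtain ⟨a, b, rfl⟩ := List.length_eq_two.mp hy
    rw [h.tm_cons_cons]
    cases a <;> simp
  · rintro (rfl | rfl)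
    · exact ⟨rfl, ⟨5, by decide⟩, 2, by decide⟩
    · exact ⟨rfl, ⟨3, by decide⟩, 1, by decide⟩

lemma leftSpecialFactors_tm_three : leftSpecialFactors tm 3 =
    {[false, true, false], [false, true, true], [true, false, false], [true, false, true]} := by
  ext y
  constructor
  · rintro ⟨hy, h⟩
    obtain ⟨a, b, c, rfl⟩ := List.length_eq_three.mp hy
    rw [h.tm_cons_cons]
    cases a <;> cases c <;> simp
  · rintro (rfl | rfl | rfl | rfl)
    · exact ⟨rfl, ⟨9, by decide⟩, 2, by decide⟩
    · exact ⟨rfl, ⟨5, by decide⟩, 11, by decide⟩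
    · exact ⟨rfl, ⟨3, by decide⟩, 7, by decide⟩
    · exact ⟨rfl, ⟨10, by decide⟩, 1, by decide⟩

def leadingTwoBits (d : ℕ) : ℕ := d / 2 ^ (Nat.log 2 d - 1)

lemma leadingTwoBits_div_two {d : ℕ} (hd : 4 ≤ d) :
    leadingTwoBits (d / 2) = leadingTwoBits d := by
  have hlog : 2 ≤ Nat.log 2 d := Nat.le_log_of_pow_le (by norm_num) (by norm_num; omega)
  rw [leadingTwoBits, leadingTwoBits, Nat.log_div_base, Nat.div_div_eq_div_mul, ← pow_succ']
  congr 2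
  omega

lemma ncard_leftSpecialFactors_tm {m : ℕ} (hm : 2 ≤ m) :
    (leftSpecialFactors tm m).ncard = if leadingTwoBits (m - 1) = 2 then 4 else 2 := by
  induction m using Nat.strong_induction_on with
  | _ m ih =>
  rcases (by omega : m = 2 ∨ m = 3 ∨ m = 4 ∨ 5 ≤ m) with rfl | rfl | rfl | hm5
  · rw [leftSpecialFactors_tm_two, Set.ncard_eq_toFinset_card']
    decide
  · rw [leftSpecialFactors_tm_three, Set.ncard_eq_toFinset_card']
    decide
  · rw [ncard_leftSpecialFactors_tm_half le_rfl, ih 2 (by norm_num) le_rfl]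
    decide
  · rw [ncard_leftSpecialFactors_tm_half (by omega), ih _ (by omega) (by omega),
      show (m + 1) / 2 - 1 = (m - 1) / 2 by omega, leadingTwoBits_div_two (by omega)]

lemma IsFactor.tm_cases {w : List Bool} (hw : IsFactor tm w) (h3 : 3 ≤ w.length) :
    ∃ r, w = true :: r ∨ w = false :: true :: r ∨ w = false :: false :: true :: r := by
  obtain ⟨i, hi⟩ := isFactor_iff.mp hw
  obtain ⟨k, hk⟩ : ∃ k, w.length = k + 3 := ⟨w.length - 3, by omega⟩
  rw [hk, window_succ, window_succ, window_succ] at hi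
  rw [hi]
  cases h0 : tm i
  · cases h1 : tm (i + 1)
    · have h2 := tm_add_two_of_tm_eq_tm_succ (h0.trans h1.symm)
      rw [h1] at h2
      exact ⟨_, Or.inr (Or.inr (by rw [h2]; rfl))⟩
    · exact ⟨_, Or.inr (Or.inl rfl)⟩
  · exact ⟨_, Or.inl rfl⟩

lemma not_isFactor_tm_100_and_001 {s : List Bool}
    (h100 : IsFactor tm (true :: false :: false :: s))
    (h001 : IsFactor tm (false :: false :: true :: s)) (hs : 4 ≤ s.length) : False := by
  obtain ⟨i, hi⟩ := isFactor_iff.mp h100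
  obtain ⟨j, hj⟩ := isFactor_iff.mp h001
  simp only [List.length_cons, window_succ, List.cons.injEq] at hi hj
  have hi1 := odd_of_tm_eq_tm_succ (hi.2.1.symm.trans hi.2.2.1)
  have hj0 := odd_of_tm_eq_tm_succ (hj.1.symm.trans hj.2.1)
  have := mod_two_eq_of_window_tm_eq hs (hi.2.2.2.symm.trans hj.2.2.2)
  omega

lemma not_isFactor_tm_001_and_010 {s : List Bool}
    (h001 : IsFactor tm (false :: false :: true :: s))
    (h010 : IsFactor tm (false :: true :: false :: s)) (hs : 7 ≤ s.length) : False := by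
  obtain ⟨i, hi⟩ := isFactor_iff.mp h001
  obtain ⟨j, hj⟩ := isFactor_iff.mp h010
  simp only [List.length_cons, window_succ, List.cons.injEq] at hi hj
  obtain ⟨hi0, hi1, -, hsi⟩ := hi
  obtain ⟨hj0, hj1, -, hsj⟩ := hj
  have hss := hsi.symm.trans hsj
  have hij := mod_two_eq_of_window_tm_eq (by omega) hss
  have hi_odd := odd_of_tm_eq_tm_succ (hi0.symm.trans hi1)
  obtain ⟨a, rfl⟩ : ∃ a, i = 2 * a + 1 := ⟨i / 2, by omega⟩
  obtain ⟨b, rfl⟩ : ∃ b, j = 2 * b + 1 := ⟨j / 2, by omega⟩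
  rw [tm_two_mul_add_one] at hi0 hj0
  rw [show 2 * a + 1 + 1 = 2 * (a + 1) by ring, tm_two_mul] at hi1
  rw [show 2 * b + 1 + 1 = 2 * (b + 1) by ring, tm_two_mul] at hj1
  rw [show 2 * a + 1 + 1 + 1 + 1 = 2 * (a + 2) by ring,
    show 2 * b + 1 + 1 + 1 + 1 = 2 * (b + 2) by ring] at hss
  -- halving: `10τ` occurs at `a` and `11τ` at `b`; then `τ` starts with `0`, so `a` is even and
  -- `b` is odd, while `τ` has length at least `4`
  have hτ := window_tm_half_eq hss
  have hb : tm b = tm (b + 1) := by rw [← hj1]; simpa using hj0.symm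
  have hb2 : tm (b + 2) = false := by rw [tm_add_two_of_tm_eq_tm_succ hb, ← hj1]; rfl
  have ha2 : tm (a + 1) = tm (a + 2) := by
    have := (window_eq_window_iff tm).mp hτ 0 (by omega)
    rw [add_zero, add_zero, hb2] at this
    rw [this, ← hi1]
  have := odd_of_tm_eq_tm_succ hb
  have := odd_of_tm_eq_tm_succ ha2
  have := mod_two_eq_of_window_tm_eq (by omega) hτ
  omega

lemma exists_pair_of_erase_eq {n : ℕ} (hn : 10 ≤ n) {u v : List Bool}
    (hu : u ∈ factorSet tm n) (hv : v ∈ factorSet tm n) (hne : u ≠ v)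
    (he : u.erase true = v.erase true) : ∃ x,
      u = false :: true :: x ∧ v = true :: false :: x ∨
      u = true :: false :: x ∧ v = false :: true :: x := by
  obtain ⟨hul, huf⟩ := hu
  obtain ⟨hvl, hvf⟩ := hv
  obtain ⟨r, rfl | rfl | rfl⟩ := huf.tm_cases (by omega) <;>
  obtain ⟨r', rfl | rfl | rfl⟩ := hvf.tm_cases (by omega) <;>
  simp at he hul hvl <;> subst he
  all_goals first
    | exact absurd rfl hne
    | exact ⟨_, .inl ⟨rfl, rfl⟩⟩
    | exact ⟨_, .inr ⟨rfl, rfl⟩⟩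
    | exact (not_isFactor_tm_100_and_001 ‹_› ‹_› (by omega)).elim
    | exact (not_isFactor_tm_001_and_010 ‹_› ‹_› (by omega)).elim

lemma rhoTort_tm_eq_ncard_image_erase {n : ℕ} (hn : 3 ≤ n) :
    rhoTort tm n = ((·.erase true) '' factorSet tm n).ncard := by
  rw [rhoTort, ← Set.ncard_image_of_injective ((·.erase true) '' factorSet tm n)
    (List.append_left_injective [true]), Set.image_image]
  refine congrArg Set.ncard (Set.image_congr fun w hw => if_pos ?_)
  obtain ⟨r, rfl | rfl | rfl⟩ := hw.2.tm_cases (by rw [hw.1]; omega) <;> simp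

theorem rho_tm_eq_rhoTort_tm_add {n : ℕ} (hn : 10 ≤ n) :
    rho tm n = rhoTort tm n + (leftSpecialFactors tm (n - 2)).ncard := by
  set F := factorSet tm n
  -- the factors `10x` whose partner `01x` is also a factor; off `T`, erasing the first `1` is
  -- injective
  set T := (fun x => true :: false :: x) '' leftSpecialFactors tm (n - 2)
  have hF : F.Finite := (List.finite_length_eq Bool n).subset fun _ hw => hw.1
  have hTF : T ⊆ F := by
    rintro _ ⟨x, ⟨hx, h⟩, rfl⟩
    exact ⟨by simp; omega, ((isFactor_tm_pair_iff (by omega)).mpr h).2⟩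
  have hpair {x : List Bool} (h01 : false :: true :: x ∈ F) (h10 : true :: false :: x ∈ F) :
      true :: false :: x ∈ T := by
    have hx : x.length = n - 2 := by have := h01.1; simp at this; omega
    exact ⟨x, ⟨hx, (isFactor_tm_pair_iff (by omega)).mp ⟨h01.2, h10.2⟩⟩, rfl⟩
  have hinj : Set.InjOn (·.erase true) (F \ T) := by
    intro u hu v hv he
    by_contra hne
    obtain ⟨x, ⟨rfl, rfl⟩ | ⟨rfl, rfl⟩⟩ := exists_pair_of_erase_eq hn hu.1 hv.1 hne he
    · exact hv.2 (hpair hu.1 hv.1)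
    · exact hu.2 (hpair hv.1 hu.1)
  have himg : (·.erase true) '' T ⊆ (·.erase true) '' (F \ T) := by
    rintro _ ⟨_, ⟨x, hx, rfl⟩, rfl⟩
    refine ⟨false :: true :: x, ⟨?_, ?_⟩, by simp⟩
    · exact ⟨by simp [hx.1]; omega, ((isFactor_tm_pair_iff (by rw [hx.1]; omega)).mpr hx.2).1⟩
    · rintro ⟨_, -, h⟩
      simp at h
  have hT : T.ncard = (leftSpecialFactors tm (n - 2)).ncard :=
    Set.ncard_image_of_injective _ fun _ _ h => by simpa using h
  have := Set.ncard_le_ncard hTF hF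
  rw [rhoTort_tm_eq_ncard_image_erase (by omega),
    Set.ncard_image_eq_ncard_sub_of_injOn_diff hF hTF hinj himg, hT]
  change F.ncard = _
  omega

/-- for all `n ≥ 10`, the tortoise complexity of the Thue–Morse word
satisfies `ρ^t_t(n) = ρ_t(n) - 4` if the first two binary digits of `n - 3` are
`1` and `0` (i.e. `(n-3) / 2^(⌊log₂(n-3)⌋ - 1) = 2`), and
`ρ^t_t(n) = ρ_t(n) - 2` otherwise. -/
theorem stmt_10 (n : ℕ) (hn : 10 ≤ n) :
    ((n - 3) / 2 ^ (Nat.log 2 (n - 3) - 1) = 2 →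
      rhoTort tm n = rho tm n - 4) ∧
    ((n - 3) / 2 ^ (Nat.log 2 (n - 3) - 1) ≠ 2 →
      rhoTort tm n = rho tm n - 2) := by
  have hrho := rho_tm_eq_rhoTort_tm_add hn
  have hcount := ncard_leftSpecialFactors_tm (m := n - 2) (by omega)
  rw [show n - 2 - 1 = n - 3 by omega, leadingTwoBits] at hcount
  constructor <;> intro hc
  · rw [if_pos hc] at hcount
    omega
  · rw [if_neg hc] at hcount
    omega
end

section
/- Let w be a finite binary word containing exactly m occurrences of the character 1. Then tortoise^(m)(w) = sort(w), the lexicographically (nondecreasingly) sorted rearrangement of w, i.e., tortoise^(m)(w) consists of |w| − m copies of 0 followed by m copies of 1. In particular, the least j with tortoise^(j)(w) = sort(w) is at most m. -/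
lemma tortoise_false_cons (u : List Bool) :
    tortoise (false :: u) = false :: tortoise u := by
  unfold tortoise
  by_cases h : true ∈ u
  · simp [h, List.mem_cons, List.erase_cons]
  · simp [h, List.mem_cons]

lemma tortoise_iter_false_cons (n : ℕ) (u : List Bool) :
    tortoise^[n] (false :: u) = false :: tortoise^[n] u := by
  induction n generalizing u with
  | zero => rfl
  | succ n ih =>
    rw [Function.iterate_succ_apply, Function.iterate_succ_apply, tortoise_false_cons, ih]

lemma tortoise_key (v : List Bool) : ∀ k : ℕ,
    tortoise^[v.count true] (v ++ List.replicate k true) =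
      List.replicate (v.count false) false ++ List.replicate (v.count true + k) true := by
  induction v with
  | nil => intro k; simp
  | cons b v ih =>
    intro k
    cases b with
    | false =>
      have hct : List.count true (false :: v) = List.count true v := by simp
      rw [hct, List.cons_append, tortoise_iter_false_cons, ih k]
      have hcf : List.count false (false :: v) = List.count false v + 1 := by simp
      rw [hcf, List.replicate_succ]
      rfl
    | true =>
      have hct : List.count true (true :: v) = List.count true v + 1 := by simp
      have hcf : List.count false (true :: v) = List.count false v := by simp
      rw [hct, hcf, List.cons_append, Function.iterate_succ_apply]
      have h1 : tortoise (true :: (v ++ List.replicate k true)) =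
          v ++ List.replicate (k + 1) true := by
        unfold tortoise
        rw [if_pos (by simp), List.erase_cons_head]
        simp [List.replicate_succ']
      rw [h1, ih (k + 1)]
      have : List.count true v + (k + 1) = List.count true v + 1 + k := by omega
      rw [this]

lemma count_add_count (v : List Bool) :
    v.count false + v.count true = v.length :=
  List.count_false_add_count_true v

/-- if the binary word `w` contains exactly `m` occurrences of `1`,
then `tortoise^[m] w` is the sorted rearrangement of `w`, consisting of
`|w| - m` copies of `0` followed by `m` copies of `1`; in particular the least
`j` with `tortoise^[j] w = sort w` is at most `m`. -/
theorem stmt_14 (w : List Bool) (m : ℕ) (hm : w.count true = m) :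
    tortoise^[m] w =
      List.replicate (w.length - m) false ++ List.replicate m true ∧
    sInf {j : ℕ | tortoise^[j] w =
      List.replicate (w.length - m) false ++ List.replicate m true} ≤ m := by
  subst hm
  have h := tortoise_key w 0
  have hc := count_add_count w
  have hlen : w.length - w.count true = w.count false := by omega
  rw [List.replicate_zero, List.append_nil, Nat.add_zero] at h
  rw [hlen]
  exact ⟨h, Nat.sInf_le h⟩
end
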